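/- Let p ≥ 1 be an integer, let N be a p-rooted almost-binary phylogenetic network on X, and let Z = (e_1, ..., e_m) be a maximal zig-zag trail of N that is a fence. Then a subset S ⊆ E(Z), encoded as the 0-1 string ⟨b_1 ... b_m⟩ with b_i = 1 iff e_i ∈ S, is B-admissible if and only if b_1 = b_m = 1 and the string contains neither '00' nor '111' as a contiguous substring. -/

import Mathlib

open Finset

variable {V : Type} [DecidableEq V] [Fintype V]

/-- The vertex set of the digraph given by the edge set `E`. -/
def verts (E : Finset (V × V)) : Finset V :=
  E.image Prod.fst ∪ E.image Prod.snd

/-- In-degree of `v` in the digraph with edge set `E`. -/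
def indeg (E : Finset (V × V)) (v : V) : ℕ :=
  (E.filter fun e => e.2 = v).card

/-- Out-degree of `v` in the digraph with edge set `E`. -/
def outdeg (E : Finset (V × V)) (v : V) : ℕ :=
  (E.filter fun e => e.1 = v).card

/-- `E` is (the edge set of) a `p`-rooted almost-binary phylogenetic network on `X`:
a finite simple DAG with exactly `p` in-degree-0 vertices, each of out-degree 1 or 2 (the roots),
whose set of in-degree-1, out-degree-0 vertices is `X` (the leaves), and all of whose other
vertices have in-degree and out-degree in `{1, 2}`. -/
structure IsPhyloNet (E : Finset (V × V)) (p : ℕ) (X : Finset V) : Prop where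
  acyclic : ∀ v : V, ¬ Relation.TransGen (fun a b => (a, b) ∈ E) v v
  roots_card : ((verts E).filter fun v => indeg E v = 0).card = p
  root_outdeg : ∀ v ∈ verts E, indeg E v = 0 → outdeg E v = 1 ∨ outdeg E v = 2
  leaves_eq : (verts E).filter (fun v => indeg E v = 1 ∧ outdeg E v = 0) = X
  internal_deg : ∀ v ∈ verts E, indeg E v ≠ 0 → v ∉ X →
    (indeg E v = 1 ∨ indeg E v = 2) ∧ (outdeg E v = 1 ∨ outdeg E v = 2)

/-- Two directed edges share a tail or share a head. -/
def Shares (e f : V × V) : Prop := e.1 = f.1 ∨ e.2 = f.2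

/-- `S` is (the edge set of) a zig-zag trail of the digraph `E`: a subgraph with `m ≥ 1`
edges which can be ordered so that consecutive edges share a head or share a tail. -/
def IsZigzagTrail (E S : Finset (V × V)) : Prop :=
  S ⊆ E ∧ ∃ l : List (V × V), l ≠ [] ∧ l.Nodup ∧ l.toFinset = S ∧ l.Chain' Shares

/-- A maximal zig-zag trail: one that is not a proper subgraph of another zig-zag trail. -/
def IsMaximalZigzagTrail (E S : Finset (V × V)) : Prop :=
  IsZigzagTrail E S ∧ ∀ S', IsZigzagTrail E S' → ¬ S ⊂ S'

/-- The `i`-th edge (0-indexed) of a zig-zag sequence on vertices `f 0, f 1, ...`;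
when `down = true` the first edge descends (`f 0 > f 1`), and directions alternate. -/
def zigEdge (f : ℕ → V) (down : Bool) (i : ℕ) : V × V :=
  if decide (i % 2 = 0) = down then (f i, f (i + 1)) else (f (i + 1), f i)

/-- `S` consists of the `m` distinct edges of the zig-zag sequence on `f 0, ..., f m`. -/
def IsZigzagShape (S : Finset (V × V)) (m : ℕ) (f : ℕ → V) (down : Bool) : Prop :=
  S = (Finset.range m).image (zigEdge f down) ∧
  ∀ i < m, ∀ j < m, zigEdge f down i = zigEdge f down j → i = j

/-- A crown: an even number `m` of edges written cyclically as `v₀ > v₁ < ⋯ < v_m = v₀`. -/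
def IsCrown (S : Finset (V × V)) : Prop :=
  ∃ m f, 1 ≤ m ∧ m % 2 = 0 ∧ f m = f 0 ∧ IsZigzagShape S m f true

/-- An M-fence: a non-crown with an even number `m` of edges,
of the form `v₀ < v₁ > ⋯ > v_m ≠ v₀`. -/
def IsMFence (S : Finset (V × V)) : Prop :=
  ¬ IsCrown S ∧ ∃ m f, 1 ≤ m ∧ m % 2 = 0 ∧ f m ≠ f 0 ∧ IsZigzagShape S m f false

/-- A W-fence: a non-crown with an even number `m` of edges,
of the form `v₀ > v₁ < ⋯ < v_m ≠ v₀`. -/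
def IsWFence (S : Finset (V × V)) : Prop :=
  ¬ IsCrown S ∧ ∃ m f, 1 ≤ m ∧ m % 2 = 0 ∧ f m ≠ f 0 ∧ IsZigzagShape S m f true

/-- An N-fence: a non-crown with an odd number `m` of edges,
of the form `v₀ > v₁ < ⋯ > v_m`. -/
def IsNFence (S : Finset (V × V)) : Prop :=
  ¬ IsCrown S ∧ ∃ m f, m % 2 = 1 ∧ IsZigzagShape S m f true

/-- A support network of `N = (V, E)`: a spanning subgraph that is itself a
`p`-rooted almost-binary phylogenetic network on `X` (identified with its edge set). -/
def IsSupportNet (E S : Finset (V × V)) (p : ℕ) (X : Finset V) : Prop :=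
  S ⊆ E ∧ verts S = verts E ∧ IsPhyloNet S p X

/-- A minimal support network: no support network is a proper subgraph of it. -/
def IsMinimalSupportNet (E S : Finset (V × V)) (p : ℕ) (X : Finset V) : Prop :=
  IsSupportNet E S p X ∧ ∀ S', IsSupportNet E S' p X → ¬ S' ⊂ S

/-- A minimum support network: one with the fewest edges among all support networks. -/
def IsMinimumSupportNet (E S : Finset (V × V)) (p : ℕ) (X : Finset V) : Prop :=
  IsSupportNet E S p X ∧ ∀ S', IsSupportNet E S' p X → S.card ≤ S'.card

/-- `S ⊆ Z` is A-admissible (degrees taken in the ambient network `E`):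
(C1) `S` contains every edge `(u,v)` of `Z` with `outdeg u = 1` or `indeg v = 1`;
(C2) of any two distinct edges of `Z` sharing a tail or a head, `S` contains at least one. -/
def AAdmissible (E Z S : Finset (V × V)) : Prop :=
  S ⊆ Z ∧
  (∀ e ∈ Z, (outdeg E e.1 = 1 ∨ indeg E e.2 = 1) → e ∈ S) ∧
  (∀ e₁ ∈ Z, ∀ e₂ ∈ Z, e₁ ≠ e₂ → Shares e₁ e₂ → e₁ ∈ S ∨ e₂ ∈ S)

/-- A B-admissible subset: an A-admissible subset none of whose proper subsets
is A-admissible. -/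
def BAdmissible (E Z S : Finset (V × V)) : Prop :=
  AAdmissible E Z S ∧ ∀ S', S' ⊂ S → ¬ AAdmissible E Z S'

/-- A C-admissible subset: an A-admissible subset of minimum cardinality. -/
def CAdmissible (E Z S : Finset (V × V)) : Prop :=
  AAdmissible E Z S ∧ ∀ S', AAdmissible E Z S' → S.card ≤ S'.card

/-- One subdivision step: an edge `(u, v)` is replaced by `(u, w), (w, v)` for a fresh
vertex `w`. -/
def SubdivStep (T T' : Finset (V × V)) : Prop :=
  ∃ u w v, (u, v) ∈ T ∧ w ∉ verts T ∧
    T' = insert (u, w) (insert (w, v) (T.erase (u, v)))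

/-- `S` is a subdivision of `T` (zero or more subdivision steps). -/
def IsSubdivisionOf (S T : Finset (V × V)) : Prop :=
  Relation.ReflTransGen SubdivStep T S

/-- A rooted binary phylogenetic tree on `X`: a 1-rooted network on `X` in which every
non-root, non-leaf vertex has in-degree 1 and out-degree 2. -/
def IsBinaryPhyloTree (T : Finset (V × V)) (X : Finset V) : Prop :=
  IsPhyloNet T 1 X ∧
  ∀ v ∈ verts T, indeg T v ≠ 0 → v ∉ X → indeg T v = 1 ∧ outdeg T v = 2

/-- `N = (V, E)` is tree-based: it has a support tree, i.e. a spanning subgraph that is a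
subdivision of some rooted binary phylogenetic tree on `X`. -/
def IsTreeBased (E : Finset (V × V)) (X : Finset V) : Prop :=
  ∃ S T, S ⊆ E ∧ verts S = verts E ∧ IsBinaryPhyloTree T X ∧ IsSubdivisionOf S T

/-- The underlying undirected simple graph of the digraph with edge set `S`. -/
def usym (S : Finset (V × V)) : SimpleGraph V where
  Adj u v := u ≠ v ∧ ((u, v) ∈ S ∨ (v, u) ∈ S)
  symm := ⟨fun _ _ h => ⟨h.1.symm, h.2.symm⟩⟩
  loopless := ⟨fun _ h => h.1 rfl⟩

/-- Two edges of `S` lie in a common block of the underlying undirected graph: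
they are equal or lie on a common cycle. -/
def SameBlock (S : Finset (V × V)) (e f : V × V) : Prop :=
  e = f ∨ ∃ (a : V) (w : (usym S).Walk a a), w.IsCycle ∧
    s(e.1, e.2) ∈ w.edges ∧ s(f.1, f.2) ∈ w.edges

/-- The number of reticulations (in-degree-2 vertices) contained in the block of the
edge `e` of `S`. -/
noncomputable def blockReticCount (S : Finset (V × V)) (e : V × V) : ℕ :=
  Set.ncard {v : V | indeg S v = 2 ∧ ∃ f ∈ S, SameBlock S e f ∧ (f.1 = v ∨ f.2 = v)}

/-- The level of the network with edge set `S`: the maximum number of reticulations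
contained in a block. -/
noncomputable def level (S : Finset (V × V)) : ℕ :=
  S.sup (blockReticCount S)

/-!
In an almost-binary network every vertex has in- and out-degree at most 2, so no three edges of
the trail share a tail or a head; hence consecutive edges of the fence `e₀, …, e_{m-1}` share
alternately a tail and a head. Two non-consecutive edges sharing an end would close the trail up
into a crown, so only consecutive edges share ends, and (C2) says exactly "no `00`". An interior
edge shares its tail with one neighbour and its head with the other, so both ends have degree 2
and (C1) concerns only `e₀` and `e_{m-1}`. These two are forced: if both ends of `e₀` had degree
2, by maximality the other edges at its tail and at its head would both lie on the trail, hence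
both equal `e₁`, so `e₁ = e₀`. Thus A-admissibility means "`b₁ = b_m = 1` and no `00`", and a
proper A-admissible subset exists exactly when some `e_i` can be dropped, i.e. at a `111`.
-/

def consSeq {α : Type*} (a : α) (e : ℕ → α) : ℕ → α
  | 0 => a
  | i + 1 => e i

lemma image_range_consSeq {α : Type*} [DecidableEq α] (a : α) (e : ℕ → α) (m : ℕ) :
    (range (m + 1)).image (consSeq a e) = insert a ((range m).image e) := by
  rw [range_add_one', image_insert, map_eq_image, image_image]
  rfl

lemma Shares.symm {V : Type} {a b : V × V} (h : Shares a b) : Shares b a :=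
  h.imp Eq.symm Eq.symm

section
variable {V : Type} [DecidableEq V]

lemma mem_verts_of_outdeg_ne_zero {E : Finset (V × V)} {v : V} (h : outdeg E v ≠ 0) :
    v ∈ verts E := by
  obtain ⟨x, hx⟩ := card_ne_zero.mp h
  rw [mem_filter] at hx
  exact mem_union_left _ (mem_image.mpr ⟨x, hx.1, hx.2⟩)

lemma mem_verts_of_indeg_ne_zero {E : Finset (V × V)} {v : V} (h : indeg E v ≠ 0) :
    v ∈ verts E := by
  obtain ⟨x, hx⟩ := card_ne_zero.mp h
  rw [mem_filter] at hx
  exact mem_union_right _ (mem_image.mpr ⟨x, hx.1, hx.2⟩)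

theorem IsPhyloNet.outdeg_le_two_and_indeg_le_two {E : Finset (V × V)} {p : ℕ} {X : Finset V}
    (hN : IsPhyloNet E p X) (v : V) : outdeg E v ≤ 2 ∧ indeg E v ≤ 2 := by
  by_cases hv : v ∈ verts E
  · by_cases hi : indeg E v = 0
    · have := hN.root_outdeg v hv hi
      omega
    by_cases hx : v ∈ X
    · rw [← hN.leaves_eq, mem_filter] at hx
      omega
    have := hN.internal_deg v hv hi hx
    omega
  · have := mt mem_verts_of_outdeg_ne_zero hv
    have := mt mem_verts_of_indeg_ne_zero hv
    omega

lemma outdeg_image_swap (E : Finset (V × V)) (v : V) :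
    outdeg (E.image Prod.swap) v = indeg E v := by
  rw [outdeg, indeg, filter_image, card_image_of_injective _ Prod.swap_injective]
  rfl

lemma two_le_outdeg {E : Finset (V × V)} {a b : V × V} (ha : a ∈ E) (hb : b ∈ E)
    (hab : a ≠ b) (h : a.1 = b.1) : 2 ≤ outdeg E a.1 :=
  one_lt_card.mpr ⟨a, mem_filter.mpr ⟨ha, rfl⟩, b, mem_filter.mpr ⟨hb, h.symm⟩, hab⟩

lemma isCrown_of_cyclic {m : ℕ} {g : ℕ → V × V} (hm : 1 ≤ m) (hm2 : m % 2 = 0)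
    (hinj : Set.InjOn g (Set.Iio m))
    (hsnd : ∀ k, k + 1 < m → k % 2 = 0 → (g k).2 = (g (k + 1)).2)
    (hfst : ∀ k, k + 1 < m → k % 2 = 1 → (g k).1 = (g (k + 1)).1)
    (hwrap : (g (m - 1)).1 = (g 0).1) :
    IsCrown ((range m).image g) := by
  -- the crown's vertices: tails of the edges at even positions, heads at odd ones
  let f : ℕ → V := fun k => if k = m then (g 0).1 else if k % 2 = 0 then (g k).1 else (g k).2
  have hzig : ∀ k < m, zigEdge f true k = g k := by
    intro k hk
    by_cases hk2 : k % 2 = 0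
    · have hk1 : k + 1 ≠ m := by omega
      simp [zigEdge, f, hk2, hk.ne, hk1, show ¬ (k + 1) % 2 = 0 by omega,
        ← hsnd k (by omega) hk2]
    · by_cases hk1 : k + 1 = m
      · subst hk1
        simp [zigEdge, f, hk2, ← hwrap]
      · simp [zigEdge, f, hk2, hk.ne, hk1, show (k + 1) % 2 = 0 by omega,
          ← hfst k (by omega) (by omega)]
  refine ⟨m, f, hm, hm2, by simp [f], ?_, ?_⟩
  · exact (image_congr fun k hk => hzig k (mem_range.mp hk)).symm
  · intro i hi j hj hij
    exact hinj hi hj (by rwa [hzig i hi, hzig j hj] at hij)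

structure ZigzagSeq (E : Finset (V × V)) (m : ℕ) (e : ℕ → V × V) : Prop where
  mem : ∀ i < m, e i ∈ E
  injOn : Set.InjOn e (Set.Iio m)
  shares : ∀ i, i + 1 < m → Shares (e i) (e (i + 1))
  outdeg_le : ∀ v, outdeg E v ≤ 2
  indeg_le : ∀ v, indeg E v ≤ 2

namespace ZigzagSeq

variable {E : Finset (V × V)} {m : ℕ} {e : ℕ → V × V} {i j k : ℕ}

lemma isZigzagTrail (h : ZigzagSeq E m e) (hm : 1 ≤ m) :
    IsZigzagTrail E ((range m).image e) := by
  refine ⟨fun x hx => ?_, (List.range m).map e, ?_, ?_, by ext; simp, ?_⟩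
  · obtain ⟨i, hi, rfl⟩ := mem_image.mp hx
    exact h.mem i (mem_range.mp hi)
  · simpa using (show m ≠ 0 by omega)
  · exact List.nodup_range.map_on fun i hi j hj hij =>
      h.injOn (List.mem_range.mp hi) (List.mem_range.mp hj) hij
  · obtain ⟨n, rfl⟩ : ∃ n, m = n + 1 := ⟨m - 1, by omega⟩
    show List.IsChain Shares ((List.range (n + 1)).map e)
    rw [List.isChain_map, List.isChain_range_succ]
    exact fun i hi => h.shares i (by omega)

lemma swap (h : ZigzagSeq E m e) : ZigzagSeq (E.image Prod.swap) m (Prod.swap ∘ e) where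
  mem i hi := mem_image_of_mem _ (h.mem i hi)
  injOn := Prod.swap_injective.comp_injOn h.injOn
  shares i hi := Or.symm (h.shares i hi)
  outdeg_le v := (outdeg_image_swap E v).trans_le (h.indeg_le v)
  indeg_le v := by
    simpa [← outdeg_image_swap, image_image] using h.outdeg_le v

lemma reverse (h : ZigzagSeq E m e) : ZigzagSeq E m (fun i => e (m - 1 - i)) where
  mem i hi := h.mem _ (by omega)
  injOn i hi j hj hij := by
    rw [Set.mem_Iio] at hi hj
    have := h.injOn (show m - 1 - i < m by omega) (show m - 1 - j < m by omega) hij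
    omega
  shares i hi := by
    have := h.shares (m - 1 - (i + 1)) (by omega)
    rw [show m - 1 - (i + 1) + 1 = m - 1 - i by omega] at this
    exact this.symm
  outdeg_le := h.outdeg_le
  indeg_le := h.indeg_le

lemma mono (h : ZigzagSeq E m e) {n : ℕ} (hnm : n ≤ m) : ZigzagSeq E n e where
  mem i hi := h.mem i (by omega)
  injOn := h.injOn.mono (Set.Iio_subset_Iio hnm)
  shares i hi := h.shares i (by omega)
  outdeg_le := h.outdeg_le
  indeg_le := h.indeg_le

lemma image_reverse (m : ℕ) (e : ℕ → V × V) :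
    (range m).image (fun i => e (m - 1 - i)) = (range m).image e := by
  ext x
  simp only [mem_image, mem_range]
  constructor
  · rintro ⟨i, hi, rfl⟩
    exact ⟨m - 1 - i, by omega, rfl⟩
  · rintro ⟨i, hi, rfl⟩
    exact ⟨m - 1 - i, by omega, by rw [show m - 1 - (m - 1 - i) = i by omega]⟩

lemma cons (h : ZigzagSeq E m e) {a : V × V} (ha : a ∈ E) (hae : a ∉ (range m).image e)
    (hs : Shares a (e 0)) : ZigzagSeq E (m + 1) (consSeq a e) where
  mem
    | 0, _ => ha
    | i + 1, hi => h.mem i (by omega)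
  injOn := by
    rintro (_ | i) hi (_ | j) hj hij <;> simp only [Set.mem_Iio] at hi hj
    · rfl
    · exact (hae (mem_image.mpr ⟨j, mem_range.mpr (by omega), (hij : a = e j).symm⟩)).elim
    · exact (hae (mem_image.mpr ⟨i, mem_range.mpr (by omega), (hij : e i = a)⟩)).elim
    · rw [h.injOn (show i < m by omega) (show j < m by omega) hij]
  shares
    | 0, _ => hs
    | i + 1, hi => h.shares i (by omega)
  outdeg_le := h.outdeg_le
  indeg_le := h.indeg_le

lemma eq_or_eq_or_eq_of_fst_eq (h : ZigzagSeq E m e) (hi : i < m) (hj : j < m) (hk : k < m)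
    (hij : (e i).1 = (e j).1) (hik : (e i).1 = (e k).1) : i = j ∨ i = k ∨ j = k := by
  by_contra! hne
  have : 2 < outdeg E (e i).1 := two_lt_card.mpr
    ⟨e i, mem_filter.mpr ⟨h.mem i hi, rfl⟩, e j, mem_filter.mpr ⟨h.mem j hj, hij.symm⟩,
      e k, mem_filter.mpr ⟨h.mem k hk, hik.symm⟩,
      h.injOn.ne hi hj hne.1, h.injOn.ne hi hk hne.2.1, h.injOn.ne hj hk hne.2.2⟩
  exact absurd (h.outdeg_le (e i).1) (by omega)

lemma eq_or_eq_or_eq_of_snd_eq (h : ZigzagSeq E m e) (hi : i < m) (hj : j < m) (hk : k < m)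
    (hij : (e i).2 = (e j).2) (hik : (e i).2 = (e k).2) : i = j ∨ i = k ∨ j = k :=
  h.swap.eq_or_eq_or_eq_of_fst_eq hi hj hk hij hik

lemma snd_eq_of_fst_ne (h : ZigzagSeq E m e) (hi : i + 1 < m)
    (hne : (e i).1 ≠ (e (i + 1)).1) : (e i).2 = (e (i + 1)).2 :=
  (h.shares i hi).resolve_left hne

lemma fst_succ_eq_iff_fst_ne (h : ZigzagSeq E m e) (hi : i + 2 < m) :
    (e (i + 1)).1 = (e (i + 2)).1 ↔ (e i).1 ≠ (e (i + 1)).1 := by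
  constructor
  · intro h₁ h₀
    have := h.eq_or_eq_or_eq_of_fst_eq (i := i + 1) (j := i) (k := i + 2) (by omega) (by omega)
      hi h₀.symm h₁
    omega
  · intro h₀
    by_contra h₁
    have := h.eq_or_eq_or_eq_of_snd_eq (i := i + 1) (j := i) (k := i + 2) (by omega) (by omega)
      hi (h.snd_eq_of_fst_ne (by omega) h₀).symm (h.snd_eq_of_fst_ne hi h₁)
    omega

lemma fst_eq_iff_parity (h : ZigzagSeq E m e) (hi : i + 1 < m) :
    (e i).1 = (e (i + 1)).1 ↔ ((e 0).1 = (e 1).1 ↔ i % 2 = 0) := by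
  induction i with
  | zero => simp
  | succ i ih =>
    rw [h.fst_succ_eq_iff_fst_ne hi, ne_eq, ih (by omega),
      show (i + 1) % 2 = 0 ↔ ¬ i % 2 = 0 by omega]
    tauto

lemma eq_zero_of_fst_eq (h : ZigzagSeq E m e) (hij : i + 2 ≤ j) (hj : j < m)
    (heq : (e i).1 = (e j).1) : i = 0 ∧ j + 1 = m ∧ (e 0).1 ≠ (e 1).1 ∧ m % 2 = 0 := by
  have hi : (e i).1 ≠ (e (i + 1)).1 := fun h₁ => by
    have := h.eq_or_eq_or_eq_of_fst_eq (j := i + 1) (k := j) (by omega) (by omega) hj h₁ heq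
    omega
  have hi₀ : i = 0 := by
    obtain _ | i := i
    · rfl
    have h₁ : (e i).1 = (e (i + 1)).1 :=
      not_not.mp fun h₁ => hi ((h.fst_succ_eq_iff_fst_ne (by omega)).mpr h₁)
    have := h.eq_or_eq_or_eq_of_fst_eq (i := i + 1) (j := i) (k := j) (by omega) (by omega) hj
      h₁.symm heq
    omega
  subst hi₀
  obtain ⟨j, rfl⟩ : ∃ j', j = j' + 1 := ⟨j - 1, by omega⟩
  have hj' : (e j).1 ≠ (e (j + 1)).1 := fun h₁ => by
    have := h.eq_or_eq_or_eq_of_fst_eq (i := j + 1) (j := j) (k := 0) hj (by omega) (by omega)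
      h₁.symm heq.symm
    omega
  have hjm : j + 2 = m := by
    by_contra hjm
    have h₁ := (h.fst_succ_eq_iff_fst_ne (i := j) (by omega)).mpr hj'
    have := h.eq_or_eq_or_eq_of_fst_eq (i := j + 1) (j := j + 2) (k := 0) hj (by omega) (by omega)
      h₁ heq.symm
    omega
  have := h.fst_eq_iff_parity (i := j) (by omega)
  refine ⟨rfl, hjm, hi, ?_⟩
  have : j % 2 = 0 := by tauto
  omega

lemma isCrown_of_fst_eq (h : ZigzagSeq E m e) (hij : i + 2 ≤ j) (hj : j < m)
    (heq : (e i).1 = (e j).1) : IsCrown ((range m).image e) := by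
  obtain ⟨rfl, hjm, h₀, hm⟩ := h.eq_zero_of_fst_eq hij hj heq
  refine isCrown_of_cyclic (by omega) hm h.injOn (fun k hk hk₂ => ?_) (fun k hk hk₂ => ?_)
    (by rw [show m - 1 = j by omega]; exact heq.symm)
  · exact h.snd_eq_of_fst_ne hk (by rw [ne_eq, h.fst_eq_iff_parity hk]; tauto)
  · exact (h.fst_eq_iff_parity hk).mpr (iff_of_false h₀ (by omega))

lemma isCrown_of_snd_eq (h : ZigzagSeq E m e) (hij : i + 2 ≤ j) (hj : j < m)
    (heq : (e i).2 = (e j).2) : IsCrown ((range m).image e) := by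
  obtain ⟨rfl, rfl, h₀, hm⟩ := h.swap.eq_zero_of_fst_eq hij hj heq
  have hT₀ : (e 0).1 = (e 1).1 := not_not.mp fun h₁ => h₀ (h.snd_eq_of_fst_ne (by omega) h₁)
  have hej : e j ∉ (range j).image e := by
    simp only [mem_image, mem_range, not_exists, not_and]
    exact fun k hk hkj => hk.ne (h.injOn (show k < j + 1 by omega) hj hkj)
  -- rotated to `e j, e 0, …, e (j - 1)`, the trail starts with a shared head and closes with a
  -- shared tail
  have hrot := (h.mono j.le_succ).cons (h.mem j hj) hej (Or.inr heq.symm)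
  rw [range_add_one, image_insert, ← image_range_consSeq]
  obtain ⟨j, rfl⟩ : ∃ j', j = j' + 1 := ⟨j - 1, by omega⟩
  refine hrot.isCrown_of_fst_eq (i := 0) (j := j + 1) hij hj ?_
  show (e (j + 1)).1 = (e j).1
  exact ((h.fst_eq_iff_parity (i := j) (by omega)).mpr (iff_of_true hT₀ (by omega))).symm

lemma succ_eq_of_shares (h : ZigzagSeq E m e) (hZ : ¬ IsCrown ((range m).image e))
    (hij : i < j) (hj : j < m) (hs : Shares (e i) (e j)) : j = i + 1 := by
  by_contra hne
  rcases hs with heq | heq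
  · exact hZ (h.isCrown_of_fst_eq (by omega) hj heq)
  · exact hZ (h.isCrown_of_snd_eq (by omega) hj heq)

lemma two_le_outdeg_fst (h : ZigzagSeq E m e) (h₀ : 0 < i) (hi : i + 1 < m) :
    2 ≤ outdeg E (e i).1 := by
  obtain ⟨i, rfl⟩ : ∃ i', i = i' + 1 := ⟨i - 1, by omega⟩
  by_cases hT : (e (i + 1)).1 = (e (i + 2)).1
  · exact two_le_outdeg (h.mem _ (by omega)) (h.mem _ hi)
      (h.injOn.ne (show i + 1 < m by omega) hi (by omega)) hT
  · have hT' : (e i).1 = (e (i + 1)).1 := not_not.mp (mt (h.fst_succ_eq_iff_fst_ne hi).mpr hT)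
    exact two_le_outdeg (h.mem _ (by omega)) (h.mem _ (by omega))
      (h.injOn.ne (show i + 1 < m by omega) (show i < m by omega) (by omega)) hT'.symm

lemma two_le_indeg_snd (h : ZigzagSeq E m e) (h₀ : 0 < i) (hi : i + 1 < m) :
    2 ≤ indeg E (e i).2 := by
  simpa only [outdeg_image_swap, Function.comp_apply, Prod.fst_swap] using
    h.swap.two_le_outdeg_fst h₀ hi

lemma mem_image_of_shares_zero (h : ZigzagSeq E m e) (hm : 1 ≤ m)
    (hmax : IsMaximalZigzagTrail E ((range m).image e)) {a : V × V} (ha : a ∈ E)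
    (hs : Shares a (e 0)) : a ∈ (range m).image e := by
  by_contra hae
  refine hmax.2 _ ((h.cons ha hae hs).isZigzagTrail (by omega)) ?_
  rw [image_range_consSeq]
  exact ssubset_insert hae

lemma outdeg_eq_one_or_indeg_eq_one_at_zero (h : ZigzagSeq E m e) (hm : 1 ≤ m)
    (hmax : IsMaximalZigzagTrail E ((range m).image e)) (hZ : ¬ IsCrown ((range m).image e)) :
    outdeg E (e 0).1 = 1 ∨ indeg E (e 0).2 = 1 := by
  have he₀ := h.mem 0 (by omega)
  have heq_one : ∀ a ∈ E, a ≠ e 0 → Shares a (e 0) → a = e 1 := by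
    intro a ha hne hs
    obtain ⟨j, hj, rfl⟩ := mem_image.mp (h.mem_image_of_shares_zero hm hmax ha hs)
    have hj₀ : j ≠ 0 := by rintro rfl; exact hne rfl
    rw [h.succ_eq_of_shares hZ (Nat.pos_of_ne_zero hj₀) (mem_range.mp hj) hs.symm]
  by_contra! hne
  have hout : 1 < outdeg E (e 0).1 := by
    have : 0 < outdeg E (e 0).1 := card_pos.mpr ⟨e 0, mem_filter.mpr ⟨he₀, rfl⟩⟩
    omega
  have hin : 1 < indeg E (e 0).2 := by
    have : 0 < indeg E (e 0).2 := card_pos.mpr ⟨e 0, mem_filter.mpr ⟨he₀, rfl⟩⟩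
    omega
  obtain ⟨a, ha, hae⟩ := exists_mem_ne hout (e 0)
  obtain ⟨b, hb, hbe⟩ := exists_mem_ne hin (e 0)
  rw [mem_filter] at ha hb
  have ha₁ := heq_one a ha.1 hae (Or.inl ha.2)
  have hb₁ := heq_one b hb.1 hbe (Or.inr hb.2)
  exact hae (Prod.ext ha.2 (by rw [ha₁, ← hb₁]; exact hb.2))

lemma outdeg_eq_one_or_indeg_eq_one_iff (h : ZigzagSeq E m e) (hm : 1 ≤ m)
    (hmax : IsMaximalZigzagTrail E ((range m).image e)) (hZ : ¬ IsCrown ((range m).image e))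
    (hk : k < m) : (outdeg E (e k).1 = 1 ∨ indeg E (e k).2 = 1) ↔ k = 0 ∨ k + 1 = m := by
  constructor
  · intro hdeg
    by_contra! hk'
    have := h.two_le_outdeg_fst (i := k) (by omega) (by omega)
    have := h.two_le_indeg_snd (i := k) (by omega) (by omega)
    omega
  · rintro (rfl | rfl)
    · exact h.outdeg_eq_one_or_indeg_eq_one_at_zero hm hmax hZ
    · simpa using h.reverse.outdeg_eq_one_or_indeg_eq_one_at_zero hm (by rwa [image_reverse])
        (by rwa [image_reverse])

end ZigzagSeq

section Admissible

variable {E S : Finset (V × V)} {m : ℕ} {e : ℕ → V × V}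

theorem aAdmissible_image_iff (hm : 1 ≤ m) (hinj : Set.InjOn e (Set.Iio m))
    (hchain : ∀ i, i + 1 < m → Shares (e i) (e (i + 1)))
    (hadj : ∀ {i j}, i < j → j < m → Shares (e i) (e j) → j = i + 1)
    (hforced : ∀ {k}, k < m →
      ((outdeg E (e k).1 = 1 ∨ indeg E (e k).2 = 1) ↔ k = 0 ∨ k + 1 = m))
    (hS : S ⊆ (range m).image e) :
    AAdmissible E ((range m).image e) S ↔
      e 0 ∈ S ∧ e (m - 1) ∈ S ∧ ∀ i, i + 1 < m → e i ∈ S ∨ e (i + 1) ∈ S := by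
  have hmem : ∀ {i}, i < m → e i ∈ (range m).image e :=
    fun hi => mem_image_of_mem e (mem_range.mpr hi)
  constructor
  · rintro ⟨-, hC1, hC2⟩
    refine ⟨hC1 _ (hmem (by omega)) ((hforced (by omega)).mpr (Or.inl rfl)),
      hC1 _ (hmem (by omega)) ((hforced (by omega)).mpr (Or.inr (by omega))), fun i hi => ?_⟩
    exact hC2 _ (hmem (by omega)) _ (hmem hi)
      (hinj.ne (Set.mem_Iio.mpr (by omega)) hi (by omega)) (hchain i hi)
  · rintro ⟨h₀, hlast, hcons⟩
    refine ⟨hS, ?_, ?_⟩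
    · rintro _ hx hdeg
      obtain ⟨k, hk, rfl⟩ := mem_image.mp hx
      rcases (hforced (mem_range.mp hk)).mp hdeg with rfl | rfl
      · exact h₀
      · simpa using hlast
    · rintro _ hx _ hy hne hs
      obtain ⟨i, hi, rfl⟩ := mem_image.mp hx
      obtain ⟨j, hj, rfl⟩ := mem_image.mp hy
      rw [mem_range] at hi hj
      rcases lt_or_gt_of_ne (mt (congrArg e) hne) with hij | hij
      · obtain rfl := hadj hij hj hs
        exact hcons i hj
      · obtain rfl := hadj hij hi hs.symm
        exact (hcons j hi).symm

theorem bAdmissible_image_iff (hm : 1 ≤ m) (hinj : Set.InjOn e (Set.Iio m))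
    (hchain : ∀ i, i + 1 < m → Shares (e i) (e (i + 1)))
    (hadj : ∀ {i j}, i < j → j < m → Shares (e i) (e j) → j = i + 1)
    (hforced : ∀ {k}, k < m →
      ((outdeg E (e k).1 = 1 ∨ indeg E (e k).2 = 1) ↔ k = 0 ∨ k + 1 = m))
    (hS : S ⊆ (range m).image e) :
    BAdmissible E ((range m).image e) S ↔
      (e 0 ∈ S ∧ e (m - 1) ∈ S ∧
       (∀ i, i + 1 < m → (e i ∈ S ∨ e (i + 1) ∈ S)) ∧
       (∀ i, i + 2 < m → ¬ (e i ∈ S ∧ e (i + 1) ∈ S ∧ e (i + 2) ∈ S))) := by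
  have hA {S : Finset (V × V)} (hS : S ⊆ (range m).image e) :=
    aAdmissible_image_iff hm hinj hchain hadj hforced hS
  constructor
  · rintro ⟨hSA, hmin⟩
    obtain ⟨h₀, hlast, hcons⟩ := (hA hS).mp hSA
    refine ⟨h₀, hlast, hcons, fun i hi ⟨hi₀, hi₁, hi₂⟩ => ?_⟩
    refine hmin _ (erase_ssubset hi₁) ?_
    have herase : ∀ {k}, k < m → k ≠ i + 1 → e k ∈ S → e k ∈ S.erase (e (i + 1)) :=
      fun hk hne h => mem_erase.mpr ⟨hinj.ne hk (Set.mem_Iio.mpr (by omega)) hne, h⟩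
    refine (hA ((erase_subset _ _).trans hS)).mpr
      ⟨herase (by omega) (by omega) h₀, herase (by omega) (by omega) hlast, fun k hk => ?_⟩
    by_cases hki : k = i
    · exact Or.inl (herase (by omega) (by omega) (hki ▸ hi₀))
    by_cases hki' : k = i + 1
    · subst hki'
      exact Or.inr (herase hi (by omega) hi₂)
    exact (hcons k hk).imp (herase (by omega) hki') (herase hk (by omega))
  · rintro ⟨h₀, hlast, hcons, hno⟩
    refine ⟨(hA hS).mpr ⟨h₀, hlast, hcons⟩, fun S' hS' hS'A => ?_⟩
    obtain ⟨h₀', hlast', hcons'⟩ := (hA (hS'.subset.trans hS)).mp hS'A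
    obtain ⟨x, hxS, hxS'⟩ := exists_of_ssubset hS'
    obtain ⟨k, hk, rfl⟩ := mem_image.mp (hS hxS)
    rw [mem_range] at hk
    have hk₀ : k ≠ 0 := by rintro rfl; exact hxS' h₀'
    have hk₁ : k + 1 ≠ m := by rintro rfl; exact hxS' (by simpa using hlast')
    obtain ⟨k, rfl⟩ : ∃ k', k = k' + 1 := ⟨k - 1, by omega⟩
    exact hno k (by omega) ⟨hS'.subset ((hcons' k (by omega)).resolve_right hxS'), hxS,
      hS'.subset ((hcons' (k + 1) (by omega)).resolve_left hxS')⟩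

end Admissible

end

theorem stmt10_general (p : ℕ) (X : Finset V)
    (E : Finset (V × V)) (hN : IsPhyloNet E p X)
    (m : ℕ) (hm : 1 ≤ m) (e : ℕ → V × V) (Z : Finset (V × V))
    (hZdef : Z = (Finset.range m).image e)
    (hinj : ∀ i < m, ∀ j < m, e i = e j → i = j)
    (hchain : ∀ i, i + 1 < m → Shares (e i) (e (i + 1)))
    (hmax : IsMaximalZigzagTrail E Z) (hfence : ¬ IsCrown Z)
    (S : Finset (V × V)) (hS : S ⊆ Z) :
    BAdmissible E Z S ↔
      (e 0 ∈ S ∧ e (m - 1) ∈ S ∧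
       (∀ i, i + 1 < m → (e i ∈ S ∨ e (i + 1) ∈ S)) ∧
       (∀ i, i + 2 < m → ¬ (e i ∈ S ∧ e (i + 1) ∈ S ∧ e (i + 2) ∈ S))) := by
  have hdeg := hN.outdeg_le_two_and_indeg_le_two
  have h : ZigzagSeq E m e :=
    ⟨fun i hi => hmax.1.1 (hZdef ▸ mem_image_of_mem e (mem_range.mpr hi)),
      fun i hi j hj => hinj i hi j hj, hchain, fun v => (hdeg v).1, fun v => (hdeg v).2⟩
  subst hZdef
  exact bAdmissible_image_iff hm h.injOn hchain (h.succ_eq_of_shares hfence)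
    (h.outdeg_eq_one_or_indeg_eq_one_iff hm hmax hfence) hS

/-- For a fence `Z = (e₁, ..., e_m)`, a subset `S ⊆ E(Z)` is B-admissible iff its 0-1
encoding has `b₁ = b_m = 1` and contains neither `00` nor `111` as a substring. -/
theorem stmt10 (p : ℕ) (hp : 1 ≤ p) (X : Finset V) (hX : X.Nonempty)
    (E : Finset (V × V)) (hN : IsPhyloNet E p X)
    (m : ℕ) (hm : 1 ≤ m) (e : ℕ → V × V) (Z : Finset (V × V))
    (hZdef : Z = (Finset.range m).image e)
    (hinj : ∀ i < m, ∀ j < m, e i = e j → i = j)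
    (hchain : ∀ i, i + 1 < m → Shares (e i) (e (i + 1)))
    (hmax : IsMaximalZigzagTrail E Z) (hfence : ¬ IsCrown Z)
    (S : Finset (V × V)) (hS : S ⊆ Z) :
    BAdmissible E Z S ↔
      (e 0 ∈ S ∧ e (m - 1) ∈ S ∧
       (∀ i, i + 1 < m → (e i ∈ S ∨ e (i + 1) ∈ S)) ∧
       (∀ i, i + 2 < m → ¬ (e i ∈ S ∧ e (i + 1) ∈ S ∧ e (i + 2) ∈ S))) :=
  stmt10_general p X E hN m hm e Z hZdef hinj hchain hmax hfence S hS
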